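/- arXiv:2604.07711 — 5 statements merged into one kernel-verified Lean document; each statement's English description precedes it below -/
import Mathlib

section
/- Let U, A, A', B, B' be measurable subsets of a probability space with measure σ. If A ∩ B, A ∩ B', A' ∩ B, and A' ∩ B' are all empty, then σ(U ∪ A ∪ B) − σ(U ∪ A' ∪ B) − σ(U ∪ A ∪ B') + σ(U ∪ A' ∪ B') = 0. -/
open MeasureTheory

lemma aux_union {X : Type*} [MeasurableSpace X] (σ : Measure X) [IsProbabilityMeasure σ]
    (U A B : Set X) (hU : MeasurableSet U) (hA : MeasurableSet A) (hB : MeasurableSet B)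
    (hAB : A ∩ B = ∅) :
    σ (U ∪ A ∪ B) = σ (U ∪ A) + σ (B \ U) := by
  have h1 : U ∪ A ∪ B = (U ∪ A) ∪ (B \ (U ∪ A)) := by
    rw [Set.union_diff_self]
  have h2 : B \ (U ∪ A) = B \ U := by
    ext x
    simp only [Set.mem_diff, Set.mem_union]
    constructor
    · rintro ⟨hx, h⟩; exact ⟨hx, fun hu => h (Or.inl hu)⟩
    · rintro ⟨hx, h⟩
      refine ⟨hx, fun hh => ?_⟩
      rcases hh with hu | ha
      · exact h hu
      · exact Set.eq_empty_iff_forall_notMem.mp hAB x ⟨ha, hx⟩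
  rw [h1, h2, measure_union _ (by measurability)]
  rw [← h2]
  exact Set.disjoint_sdiff_right

theorem second_difference_vanishes_of_disjoint {X : Type*} [MeasurableSpace X]
    (σ : Measure X) [IsProbabilityMeasure σ] (U A A' B B' : Set X)
    (hU : MeasurableSet U) (hA : MeasurableSet A) (hA' : MeasurableSet A')
    (hB : MeasurableSet B) (hB' : MeasurableSet B')
    (hAB : A ∩ B = ∅) (hAB' : A ∩ B' = ∅) (hA'B : A' ∩ B = ∅) (hA'B' : A' ∩ B' = ∅) :
    (σ (U ∪ A ∪ B)).toReal - (σ (U ∪ A' ∪ B)).toReal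
      - (σ (U ∪ A ∪ B')).toReal + (σ (U ∪ A' ∪ B')).toReal = 0 := by
  rw [aux_union σ U A B hU hA hB hAB, aux_union σ U A' B hU hA' hB hA'B,
    aux_union σ U A B' hU hA hB' hAB', aux_union σ U A' B' hU hA' hB' hA'B']
  have h : ∀ s t : Set X, ((σ s + σ t).toReal) = (σ s).toReal + (σ t).toReal := by
    intro s t
    exact ENNReal.toReal_add (measure_ne_top σ s) (measure_ne_top σ t)
  rw [h, h, h, h]
  ring
end

section
/- Let d ≥ 2 and let r ∈ [0, π/2]. Then ∫₀^{2r} sin(t)^{d−2} dt ≤ 2^{d−1} ∫₀^{r} sin(t)^{d−2} dt. -/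
open Real MeasureTheory intervalIntegral

theorem integral_sin_pow_two_mul_le (d : ℕ) (hd : 2 ≤ d) (r : ℝ) (hr : r ∈ Set.Icc 0 (π / 2)) :
    ∫ t in (0:ℝ)..(2 * r), Real.sin t ^ (d - 2) ≤
      2 ^ (d - 1) * ∫ t in (0:ℝ)..r, Real.sin t ^ (d - 2) := by
  obtain ⟨hr0, hrπ⟩ := hr
  set n := d - 2 with hn
  have hsub : ∫ t in (0:ℝ)..(2 * r), Real.sin t ^ n
      = 2 * ∫ x in (0:ℝ)..r, Real.sin (2 * x) ^ n := by
    have := intervalIntegral.integral_comp_mul_left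
      (fun t => Real.sin t ^ n) (c := (2:ℝ)) (a := 0) (b := r)
    replace this := this two_ne_zero
    simp only [mul_zero, smul_eq_mul] at this
    rw [this]; ring
  have hmono : ∫ x in (0:ℝ)..r, Real.sin (2 * x) ^ n
      ≤ ∫ x in (0:ℝ)..r, 2 ^ n * Real.sin x ^ n := by
    apply intervalIntegral.integral_mono_on hr0
    · exact (Continuous.intervalIntegrable (by continuity) _ _)
    · exact (Continuous.intervalIntegrable (by continuity) _ _)
    · intro x hx
      obtain ⟨hx0, hxr⟩ := hx
      have hsx : 0 ≤ Real.sin x := Real.sin_nonneg_of_nonneg_of_le_pi hx0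
        (le_trans (hxr.trans hrπ) (by linarith [Real.pi_pos]))
      have hcx0 : 0 ≤ Real.cos x := Real.cos_nonneg_of_mem_Icc
        ⟨by linarith [Real.pi_pos], hxr.trans hrπ⟩
      have hcx1 : Real.cos x ≤ 1 := Real.cos_le_one x
      rw [Real.sin_two_mul]
      calc (2 * Real.sin x * Real.cos x) ^ n
          = 2 ^ n * Real.sin x ^ n * Real.cos x ^ n := by ring
        _ ≤ 2 ^ n * Real.sin x ^ n * 1 := by
            apply mul_le_mul_of_nonneg_left (pow_le_one₀ hcx0 hcx1)
            positivity
        _ = 2 ^ n * Real.sin x ^ n := by ring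
  have hconst : ∫ x in (0:ℝ)..r, 2 ^ n * Real.sin x ^ n
      = 2 ^ n * ∫ x in (0:ℝ)..r, Real.sin x ^ n := by
    simp [intervalIntegral.integral_const_mul]
  have hd1 : d - 1 = n + 1 := by omega
  rw [hsub, hd1, pow_succ]
  nlinarith [hmono, hconst]
end

section
/- Let d ≥ 2 and define the normalized cap-measure function F(r) = (∫₀^r sin(t)^{d−2} dt) / (∫₀^π sin(t)^{d−2} dt) for r ∈ [0, π]. If r_N ∈ [0, π] satisfies F(r_N) = 1/N with N ≥ 2, then r_N ≤ π/2 and F(2r_N) ≤ 2^{d−1}/N. -/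
open Real MeasureTheory intervalIntegral

theorem cap_measure_doubling (d : ℕ) (hd : 2 ≤ d) (N : ℕ) (hN : 2 ≤ N)
    (F : ℝ → ℝ)
    (hF : ∀ r, F r = (∫ t in (0:ℝ)..r, Real.sin t ^ (d - 2)) /
        (∫ t in (0:ℝ)..π, Real.sin t ^ (d - 2)))
    (rN : ℝ) (hrN : rN ∈ Set.Icc 0 π) (hFrN : F rN = 1 / N) :
    rN ≤ π / 2 ∧ F (2 * rN) ≤ 2 ^ (d - 1) / N := by
  set n := d - 2 with hn
  have hcont : Continuous (fun t : ℝ => Real.sin t ^ n) := by continuity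
  have hint : ∀ a b : ℝ, IntervalIntegrable (fun t => Real.sin t ^ n) volume a b :=
    fun a b => hcont.intervalIntegrable a b
  have hT : 0 < ∫ t in (0:ℝ)..π, Real.sin t ^ n := by
    apply intervalIntegral.intervalIntegral_pos_of_pos_on (hint 0 π)
    · intro x hx
      exact pow_pos (Real.sin_pos_of_pos_of_lt_pi hx.1 hx.2) n
    · exact Real.pi_pos
  have hNpos : (0:ℝ) < N := by exact_mod_cast Nat.pos_of_ne_zero (by omega)
  have h1 : (∫ t in (0:ℝ)..rN, Real.sin t ^ n) / (∫ t in (0:ℝ)..π, Real.sin t ^ n)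
      = 1 / N := (hF rN).symm.trans hFrN
  have hIrN : (∫ t in (0:ℝ)..rN, Real.sin t ^ n) * N = ∫ t in (0:ℝ)..π, Real.sin t ^ n := by
    rw [div_eq_div_iff hT.ne' hNpos.ne'] at h1
    linarith
  -- symmetry: ∫_{π/2}^π = ∫_0^{π/2}
  have hsym : (∫ t in (π/2)..π, Real.sin t ^ n) = ∫ t in (0:ℝ)..(π/2), Real.sin t ^ n := by
    have h := intervalIntegral.integral_comp_sub_left (a := π/2) (b := π)
      (fun t => Real.sin t ^ n) π
    simp only [Real.sin_pi_sub, sub_self] at h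
    rw [show π - π/2 = π/2 by ring] at h
    exact h
  have hsplit : (∫ t in (0:ℝ)..(π/2), Real.sin t ^ n) + (∫ t in (π/2)..π, Real.sin t ^ n)
      = ∫ t in (0:ℝ)..π, Real.sin t ^ n :=
    intervalIntegral.integral_add_adjacent_intervals (hint 0 (π/2)) (hint (π/2) π)
  have hhalf : 2 * (∫ t in (0:ℝ)..(π/2), Real.sin t ^ n)
      = ∫ t in (0:ℝ)..π, Real.sin t ^ n := by
    rw [← hsplit, hsym]; ring
  have hr2 : rN ≤ π / 2 := by
    by_contra h
    push_neg at h
    have hpos : 0 < ∫ t in (π/2)..rN, Real.sin t ^ n := by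
      apply intervalIntegral.intervalIntegral_pos_of_pos_on (hint (π/2) rN)
      · intro x hx
        exact pow_pos (Real.sin_pos_of_pos_of_lt_pi
          (lt_trans (by positivity) hx.1) (lt_of_lt_of_le hx.2 hrN.2)) n
      · exact h
    have hsplit2 : (∫ t in (0:ℝ)..(π/2), Real.sin t ^ n) + (∫ t in (π/2)..rN, Real.sin t ^ n)
        = ∫ t in (0:ℝ)..rN, Real.sin t ^ n :=
      intervalIntegral.integral_add_adjacent_intervals (hint 0 (π/2)) (hint (π/2) rN)
    -- I(rN) > T/2, but I(rN) = T/N ≤ T/2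
    have hN2 : (2:ℝ) ≤ N := by exact_mod_cast hN
    nlinarith [hIrN, hhalf, hsplit2, hpos, hT]
  -- doubling
  have hrN0 : 0 ≤ rN := hrN.1
  have hsub : (∫ t in (0:ℝ)..(2*rN), Real.sin t ^ n)
      = 2 * ∫ s in (0:ℝ)..rN, Real.sin (2*s) ^ n := by
    rw [intervalIntegral.integral_comp_mul_left (fun t => Real.sin t ^ n) two_ne_zero]
    simp [smul_eq_mul]
  have hmono : (∫ s in (0:ℝ)..rN, Real.sin (2*s) ^ n)
      ≤ ∫ s in (0:ℝ)..rN, (2 * Real.sin s) ^ n := by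
    apply intervalIntegral.integral_mono_on hrN0
    · exact ((hcont.comp (continuous_const.mul continuous_id)).intervalIntegrable 0 rN)
    · exact (((continuous_const.mul Real.continuous_sin).pow n).intervalIntegrable 0 rN)
    · intro s hs
      have hs0 : 0 ≤ s := hs.1
      have hs2 : s ≤ π/2 := le_trans hs.2 hr2
      have hsin0 : 0 ≤ Real.sin s := Real.sin_nonneg_of_nonneg_of_le_pi hs0 (by linarith [Real.pi_pos])
      have h2s : 0 ≤ Real.sin (2*s) :=
        Real.sin_nonneg_of_nonneg_of_le_pi (by linarith) (by linarith)
      have hle : Real.sin (2*s) ≤ 2 * Real.sin s := by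
        rw [Real.sin_two_mul]
        nlinarith [Real.cos_le_one s]
      exact pow_le_pow_left₀ h2s hle n
  have hconst : (∫ s in (0:ℝ)..rN, (2 * Real.sin s) ^ n)
      = 2^n * ∫ s in (0:ℝ)..rN, Real.sin s ^ n := by
    simp_rw [mul_pow]
    exact intervalIntegral.integral_const_mul _ _
  have hd1 : d - 1 = n + 1 := by omega
  refine ⟨hr2, ?_⟩
  rw [hF, hd1]
  rw [div_le_div_iff₀ hT hNpos]
  have key : (∫ t in (0:ℝ)..(2*rN), Real.sin t ^ n)
      ≤ 2^(n+1) * ∫ t in (0:ℝ)..rN, Real.sin t ^ n := by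
    rw [hsub, pow_succ]
    nlinarith [hmono, hconst]
  nlinarith [mul_le_mul_of_nonneg_right key hNpos.le, hIrN,
    pow_pos (show (0:ℝ) < 2 by norm_num) (n+1)]
end

section
/- Let U₁, U₂ be independent uniformly distributed random points on the unit sphere S^{d−1} (d ≥ 2), and let C_N(x) be the geodesic cap centered at x with normalized surface measure 1/N, where N ≥ 2. Then P(C_N(U₁) ∩ C_N(U₂) ≠ ∅) ≤ 2^{d−1}/N. -/
open Real MeasureTheory ProbabilityTheory InnerProductSpace

/-- The geodesic cap of radius `r` centered at `x` on the unit sphere. -/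
noncomputable def geodesicCap {d : ℕ} (r : ℝ)
    (x : Metric.sphere (0 : EuclideanSpace ℝ (Fin d)) 1) :
    Set (Metric.sphere (0 : EuclideanSpace ℝ (Fin d)) 1) :=
  {y | Real.arccos ⟪(x : EuclideanSpace ℝ (Fin d)), (y : EuclideanSpace ℝ (Fin d))⟫_ℝ ≤ r}

/-- The map induced on the unit sphere by a linear isometry of the ambient space. -/
noncomputable def sphereMap {d : ℕ} (f : EuclideanSpace ℝ (Fin d) ≃ₗᵢ[ℝ] EuclideanSpace ℝ (Fin d))
    (y : Metric.sphere (0 : EuclideanSpace ℝ (Fin d)) 1) :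
    Metric.sphere (0 : EuclideanSpace ℝ (Fin d)) 1 :=
  ⟨f y, by
    have hy : ‖(y : EuclideanSpace ℝ (Fin d))‖ = 1 :=
      mem_sphere_zero_iff_norm.mp y.2
    simp [mem_sphere_zero_iff_norm, f.norm_map, hy]⟩

/-!
If the two caps meet, the triangle inequality for angles puts `U₂` in the cap of radius `2 r_N`
around `U₁`; by independence and invariance the probability is at most `σ (C_{2 r_N}(x))`.

To compute cap measures, integrate the indicator of `{(y, v) | v ∈ capCone s y}` over
`σ ⊗ volume`: slicing in `v` gives `σ (C_s(x))` times the volume of the unit ball, slicing in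
`y` gives the volume of the cone `capCone s x` over the cap. In the coordinates
`(⟪x, v⟫, v - ⟪x, v⟫ x)` the radial formula on `xᗮ` followed by planar polar coordinates
evaluates that volume as a constant times `∫₀ˢ sin^{d-2}`, so
`σ (C_s(x)) = ∫₀ˢ sin^{d-2} / ∫₀^π sin^{d-2}`. Finally `|sin 2θ| ≤ 2 |sin θ|` gives
`∫₀^{2r} sin^{d-2} ≤ 2^{d-1} ∫₀^r sin^{d-2}`.
-/

open Set Metric InnerProductGeometry

lemma lintegral_fun_norm_addHaar {E : Type*} [NormedAddCommGroup E] [NormedSpace ℝ E]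
    [Nontrivial E] [FiniteDimensional ℝ E] [MeasurableSpace E] [BorelSpace E]
    (μ : Measure E) [μ.IsAddHaarMeasure] {f : ℝ → ENNReal} (hf : Measurable f) :
    ∫⁻ x, f ‖x‖ ∂μ = Module.finrank ℝ E * μ (ball 0 1) *
      ∫⁻ r in Ioi 0, ENNReal.ofReal (r ^ (Module.finrank ℝ E - 1)) * f r := by
  calc ∫⁻ x, f ‖x‖ ∂μ
      = ∫⁻ x : ({0}ᶜ : Set E), f ‖x.1‖ ∂(μ.comap (↑)) := by
        rw [lintegral_subtype_comap (measurableSet_singleton _).compl fun x ↦ f ‖x‖,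
          restrict_compl_singleton]
    _ = ∫⁻ x, f x.2 ∂μ.toSphere.prod (Measure.volumeIoiPow (Module.finrank ℝ E - 1)) := by
        simpa using μ.measurePreserving_homeomorphUnitSphereProd.lintegral_comp_emb
          (Homeomorph.measurableEmbedding _) (f ∘ Subtype.val ∘ Prod.snd)
    _ = μ.toSphere univ * ∫⁻ r, f r ∂(Measure.volumeIoiPow (Module.finrank ℝ E - 1)) := by
        rw [lintegral_prod _ (by fun_prop)]
        simp only [lintegral_const, mul_comm]
    _ = _ := by
        rw [μ.toSphere_apply_univ, Measure.volumeIoiPow,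
          lintegral_withDensity_eq_lintegral_mul₀ (by fun_prop) (by fun_prop),
          ← lintegral_subtype_comap measurableSet_Ioi
            (fun r ↦ ENNReal.ofReal (r ^ (Module.finrank ℝ E - 1)) * f r)]
        rfl

-- `|sin|` rather than `sin`: the two agree on `[0, π]`, and with `|sin|` the doubling bound
-- `sinPowIntegral_two_mul_le` holds for every `r ≥ 0`.
noncomputable def sinPowIntegral (n : ℕ) (s : ℝ) : ℝ := ∫ θ in 0..s, |sin θ| ^ n

lemma ofReal_sinPowIntegral (n : ℕ) {s : ℝ} (hs : 0 ≤ s) :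
    ENNReal.ofReal (sinPowIntegral n s) = ∫⁻ θ in Ioc 0 s, ENNReal.ofReal (|sin θ| ^ n) := by
  rw [sinPowIntegral, intervalIntegral.integral_of_le hs, ofReal_integral_eq_lintegral_ofReal
    ((Continuous.integrableOn_Icc (by fun_prop)).mono_set Ioc_subset_Icc_self)
    (ae_of_all _ fun θ ↦ by positivity)]

lemma sinPowIntegral_nonneg (n : ℕ) {s : ℝ} (hs : 0 ≤ s) : 0 ≤ sinPowIntegral n s :=
  intervalIntegral.integral_nonneg hs fun _ _ ↦ by positivity

lemma sinPowIntegral_mono (n : ℕ) {a b : ℝ} (ha : 0 ≤ a) (hab : a ≤ b) :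
    sinPowIntegral n a ≤ sinPowIntegral n b :=
  intervalIntegral.integral_mono_interval le_rfl ha hab (ae_of_all _ fun _ ↦ by positivity)
    (Continuous.intervalIntegrable (by fun_prop) _ _)

lemma sinPowIntegral_two_mul_le (n : ℕ) {r : ℝ} (hr : 0 ≤ r) :
    sinPowIntegral n (2 * r) ≤ 2 ^ (n + 1) * sinPowIntegral n r := by
  have hsubst : sinPowIntegral n (2 * r) = 2 * ∫ θ in 0..r, |sin (2 * θ)| ^ n := by
    rw [intervalIntegral.integral_comp_mul_left (fun θ ↦ |sin θ| ^ n) two_ne_zero, mul_zero,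
      smul_eq_mul, ← mul_assoc, mul_inv_cancel₀ two_ne_zero, one_mul, sinPowIntegral]
  have hle : ∫ θ in 0..r, |sin (2 * θ)| ^ n ≤ ∫ θ in 0..r, 2 ^ n * |sin θ| ^ n := by
    refine intervalIntegral.integral_mono_on hr (Continuous.intervalIntegrable (by fun_prop) _ _)
      (Continuous.intervalIntegrable (by fun_prop) _ _) fun θ _ ↦ ?_
    rw [← mul_pow]
    refine pow_le_pow_left₀ (abs_nonneg _) ?_ n
    rw [sin_two_mul, abs_mul, abs_mul, abs_two]
    exact mul_le_of_le_one_right (by positivity) (abs_cos_le_one θ)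
  calc sinPowIntegral n (2 * r) = 2 * ∫ θ in 0..r, |sin (2 * θ)| ^ n := hsubst
    _ ≤ 2 * ∫ θ in 0..r, 2 ^ n * |sin θ| ^ n := by gcongr
    _ = 2 ^ (n + 1) * sinPowIntegral n r := by
      rw [intervalIntegral.integral_const_mul, sinPowIntegral, pow_succ']
      ring

-- The image of `capCone s y`, for `‖y‖ = 1`, under `v ↦ (⟪y, v⟫, ‖v - ⟪y, v⟫ y‖)`.
def planarSector (s : ℝ) : Set (ℝ × ℝ) :=
  {q | √(q.1 ^ 2 + q.2 ^ 2) ≤ 1 ∧ √(q.1 ^ 2 + q.2 ^ 2) * cos s ≤ q.1}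

lemma measurableSet_planarSector (s : ℝ) : MeasurableSet (planarSector s) := by
  rw [planarSector, ofPred_and]
  exact (measurableSet_le (by fun_prop) measurable_const).inter
    (measurableSet_le (by fun_prop) measurable_fst)

lemma polarCoord_symm_mem_planarSector_iff {s R θ : ℝ} (hs : s ∈ Icc 0 π) (hR : 0 < R)
    (hθ : θ ∈ Ioo (-π) π) :
    polarCoord.symm (R, θ) ∈ planarSector s ∩ {q | 0 < q.2} ↔
      R ≤ 1 ∧ θ ∈ Ioc 0 s := by
  have hnorm : √((R * cos θ) ^ 2 + (R * sin θ) ^ 2) = R := by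
    rw [show (R * cos θ) ^ 2 + (R * sin θ) ^ 2 = R ^ 2 by
      linear_combination R ^ 2 * sin_sq_add_cos_sq θ, sqrt_sq hR.le]
  have hsin : 0 < R * sin θ ↔ 0 < θ := by
    rw [mul_pos_iff_of_pos_left hR]
    refine ⟨fun h ↦ ?_, fun h ↦ sin_pos_of_pos_of_lt_pi h hθ.2⟩
    by_contra! h'
    linarith [sin_nonpos_of_nonpos_of_neg_pi_le h' hθ.1.le]
  simp only [polarCoord_symm_apply, planarSector, mem_inter_iff, mem_ofPred_eq, hnorm, hsin,
    mem_Ioc]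
  constructor
  · rintro ⟨⟨hR1, hcos⟩, hθ0⟩
    have : cos s ≤ cos θ := le_of_mul_le_mul_left (by linarith) hR
    exact ⟨hR1, hθ0, (strictAntiOn_cos.le_iff_ge hs ⟨hθ0.le, hθ.2.le⟩).1 this⟩
  · rintro ⟨hR1, hθ0, hθs⟩
    exact ⟨⟨hR1, mul_le_mul_of_nonneg_left
      (cos_le_cos_of_nonneg_of_le_pi hθ0.le hs.2 hθs) hR.le⟩, hθ0⟩

lemma lintegral_planarSector (n : ℕ) {s : ℝ} (hs : s ∈ Icc 0 π) :
    ∫⁻ q, (planarSector s ∩ {q | 0 < q.2}).indicator (fun q ↦ ENNReal.ofReal (q.2 ^ n)) q =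
      (∫⁻ R in Ioc 0 1, ENNReal.ofReal (R ^ (n + 1))) *
        ENNReal.ofReal (sinPowIntegral n s) := by
  have hpolar : ∀ p ∈ polarCoord.target, ENNReal.ofReal p.1 •
      (planarSector s ∩ {q | 0 < q.2}).indicator (fun q ↦ ENNReal.ofReal (q.2 ^ n))
        (polarCoord.symm p) =
      (Ioc 0 1).indicator (fun R ↦ ENNReal.ofReal (R ^ (n + 1))) p.1 *
        (Ioc 0 s).indicator (fun θ ↦ ENNReal.ofReal (|sin θ| ^ n)) p.2 := by
    rintro ⟨R, θ⟩ ⟨hR, hθ⟩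
    by_cases hmem : R ≤ 1 ∧ θ ∈ Ioc 0 s
    · have hsin : 0 < sin θ := sin_pos_of_pos_of_lt_pi hmem.2.1 hθ.2
      rw [indicator_of_mem ((polarCoord_symm_mem_planarSector_iff hs hR hθ).2 hmem),
        indicator_of_mem (show R ∈ Ioc 0 1 from ⟨hR, hmem.1⟩), indicator_of_mem hmem.2,
        smul_eq_mul, ← ENNReal.ofReal_mul hR.le, ← ENNReal.ofReal_mul (pow_nonneg hR.le _)]
      simp only [polarCoord_symm_apply, abs_of_pos hsin]
      ring_nf
    · rw [indicator_of_notMem (mt (polarCoord_symm_mem_planarSector_iff hs hR hθ).1 hmem),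
        smul_zero]
      rcases not_and_or.1 hmem with h | h
      · rw [indicator_of_notMem (show R ∉ Ioc 0 1 from fun h' ↦ h h'.2), zero_mul]
      · rw [indicator_of_notMem h, mul_zero]
  have hθ : (Ioc 0 s ∩ Ioo (-π) π : Set ℝ) =ᵐ[volume] Ioc 0 s :=
    ((ae_eq_refl _).inter Ioo_ae_eq_Ioc).trans <|
      .of_eq (inter_eq_left.2 (Ioc_subset_Ioc (by linarith [pi_pos]) hs.2))
  rw [← lintegral_comp_polarCoord_symm, setLIntegral_congr_fun
      polarCoord.open_target.measurableSet hpolar, polarCoord_target, Measure.volume_eq_prod,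
    ← Measure.prod_restrict, lintegral_prod_mul
      ((Measurable.indicator (by fun_prop) measurableSet_Ioc).aemeasurable)
      ((Measurable.indicator (by fun_prop) measurableSet_Ioc).aemeasurable),
    lintegral_indicator measurableSet_Ioc, lintegral_indicator measurableSet_Ioc,
    Measure.restrict_restrict measurableSet_Ioc, Measure.restrict_restrict measurableSet_Ioc,
    inter_eq_left.2 Ioc_subset_Ioi_self, Measure.restrict_congr_set hθ,
    ofReal_sinPowIntegral n hs.1]

section Cone

variable {F : Type*} [NormedAddCommGroup F] [InnerProductSpace ℝ F]

def capCone (s : ℝ) (y : F) : Set F :=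
  {v | ‖v‖ ≤ 1 ∧ ‖v‖ * cos s ≤ ⟪y, v⟫_ℝ}

lemma volume_capCone_withLp_prod {V : Type*} [NormedAddCommGroup V] [InnerProductSpace ℝ V]
    [FiniteDimensional ℝ V] [MeasurableSpace V] [BorelSpace V] {n : ℕ}
    (hV : Module.finrank ℝ V = n + 1) {s : ℝ} (hs : s ∈ Icc 0 π) :
    volume (capCone s (WithLp.toLp 2 ((1 : ℝ), (0 : V)))) =
      (n + 1) * volume (ball (0 : V) 1) *
        ((∫⁻ R in Ioc 0 1, ENNReal.ofReal (R ^ (n + 1))) *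
          ENNReal.ofReal (sinPowIntegral n s)) := by
  have : Nontrivial V := Module.nontrivial_of_finrank_pos (R := ℝ) (by omega)
  set S := planarSector s
  have hcone : capCone s (WithLp.toLp 2 ((1 : ℝ), (0 : V))) =
      (MeasurableEquiv.toLp 2 (ℝ × V)).symm ⁻¹' {p | (p.1, ‖p.2‖) ∈ S} := by
    ext x
    simp [capCone, S, planarSector, WithLp.prod_norm_eq_of_L2]
  have hS : MeasurableSet {p : ℝ × V | (p.1, ‖p.2‖) ∈ S} :=
    (measurableSet_planarSector s).preimage (by fun_prop)
  have hsector : Measurable ((S ∩ {q | 0 < q.2}).indicator fun q ↦ ENNReal.ofReal (q.2 ^ n)) :=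
    Measurable.indicator (by fun_prop)
      ((measurableSet_planarSector s).inter (measurableSet_lt measurable_const measurable_snd))
  rw [hcone, (WithLp.volume_preserving_symm_measurableEquiv_toLp_prod ℝ V).measure_preimage_equiv,
    Measure.volume_eq_prod, Measure.prod_apply hS, ← lintegral_planarSector _ hs,
    Measure.volume_eq_prod, lintegral_prod _ hsector.aemeasurable,
    ← lintegral_const_mul _ hsector.lintegral_prod_right']
  congr 1 with t
  have hslice : volume (Prod.mk t ⁻¹' {p : ℝ × V | (p.1, ‖p.2‖) ∈ S}) =
      ∫⁻ w : V, (fun ρ ↦ S.indicator 1 (t, ρ)) ‖w‖ :=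
    (lintegral_indicator_one (hS.preimage measurable_prodMk_left)).symm
  rw [hslice, lintegral_fun_norm_addHaar volume (f := fun ρ ↦ S.indicator 1 (t, ρ))
      ((measurable_const.indicator (measurableSet_planarSector s)).comp measurable_prodMk_left),
    ← lintegral_indicator measurableSet_Ioi, hV, Nat.add_sub_cancel, Nat.cast_succ]
  congr 2 with ρ
  by_cases hρ : 0 < ρ <;> by_cases hρS : (t, ρ) ∈ S <;> simp [indicator, hρ, hρS, S]

lemma exists_linearIsometryEquiv_withLp_prod {y : F} (hy : ‖y‖ = 1) :
    ∃ L : F ≃ₗᵢ[ℝ] WithLp 2 (ℝ × (ℝ ∙ y)ᗮ), L y = WithLp.toLp 2 (1, 0) := by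
  refine ⟨(ℝ ∙ y).orthogonalDecomposition.trans (LinearIsometryEquiv.withLpProdCongr 2
    (LinearIsometryEquiv.toSpanUnitSingleton y hy).symm (LinearIsometryEquiv.refl ℝ _)), ?_⟩
  have hmem := Submodule.mem_span_singleton_self (R := ℝ) y
  have hproj : (ℝ ∙ y).orthogonalProjectionOnto y = ⟨y, hmem⟩ :=
    Submodule.orthogonalProjectionOnto_mem_subspace_eq_self ⟨y, hmem⟩
  rw [LinearIsometryEquiv.trans_apply, Submodule.orthogonalDecomposition_apply, hproj,
    Submodule.orthogonalProjectionOnto_orthogonal_apply_eq_zero hmem]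
  simp [LinearIsometryEquiv.symm_apply_eq]

lemma LinearIsometryEquiv.preimage_capCone {G : Type*} [NormedAddCommGroup G]
    [InnerProductSpace ℝ G] (L : F ≃ₗᵢ[ℝ] G) (s : ℝ) (y : F) :
    L ⁻¹' capCone s (L y) = capCone s y := by
  ext v
  simp [capCone, LinearIsometryEquiv.inner_map_map]

variable [FiniteDimensional ℝ F] [MeasurableSpace F] [BorelSpace F]

lemma LinearIsometryEquiv.volume_capCone {G : Type*} [NormedAddCommGroup G]
    [InnerProductSpace ℝ G] [FiniteDimensional ℝ G] [MeasurableSpace G] [BorelSpace G]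
    (L : F ≃ₗᵢ[ℝ] G) (s : ℝ) (y : F) :
    volume (capCone s (L y)) = volume (capCone s y) := by
  rw [← L.preimage_capCone s y]
  exact (L.measurePreserving.measure_preimage_equiv (f := L.toMeasurableEquiv) _).symm

lemma exists_volume_capCone_eq (hF : 2 ≤ Module.finrank ℝ F) {y : F} (hy : ‖y‖ = 1) :
    ∃ C, ∀ s ∈ Icc 0 π,
      volume (capCone s y) = C * ENNReal.ofReal (sinPowIntegral (Module.finrank ℝ F - 2) s) := by
  obtain ⟨L, hL⟩ := exists_linearIsometryEquiv_withLp_prod hy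
  have hdim : Module.finrank ℝ (ℝ ∙ y)ᗮ = Module.finrank ℝ F - 2 + 1 := by
    have := (ℝ ∙ y).finrank_add_finrank_orthogonal
    rw [finrank_span_singleton (norm_ne_zero_iff.1 (by simp [hy]))] at this
    omega
  exact ⟨_, fun s hs ↦ by
    rw [← L.volume_capCone, hL, volume_capCone_withLp_prod hdim hs, ← mul_assoc]⟩

end Cone

section Sphere

local notation "𝕊" d:max => Metric.sphere (0 : EuclideanSpace ℝ (Fin d)) 1

variable {d : ℕ}

lemma mem_geodesicCap_iff_angle_le {s : ℝ} {x y : 𝕊 d} :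
    y ∈ geodesicCap s x ↔ angle x.1 y.1 ≤ s := by
  simp [geodesicCap, angle, norm_eq_of_mem_sphere]

lemma mem_geodesicCap_iff_cos_le {s : ℝ} (hs : s ∈ Icc 0 π) {x y : 𝕊 d} :
    y ∈ geodesicCap s x ↔ cos s ≤ ⟪x.1, y.1⟫_ℝ := by
  rw [mem_geodesicCap_iff_angle_le,
    ← strictAntiOn_cos.le_iff_ge hs ⟨angle_nonneg _ _, angle_le_pi _ _⟩, cos_angle]
  simp [norm_eq_of_mem_sphere]

lemma geodesicCap_pi (x : 𝕊 d) : geodesicCap π x = univ :=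
  eq_univ_of_forall fun _ ↦ arccos_le_pi _

lemma geodesicCap_min_pi (s : ℝ) (x : 𝕊 d) : geodesicCap (min s π) x = geodesicCap s x := by
  ext y
  simp [mem_geodesicCap_iff_angle_le, angle_le_pi]

lemma mem_geodesicCap_add_of_inter_nonempty {r r' : ℝ} {x y : 𝕊 d}
    (h : (geodesicCap r x ∩ geodesicCap r' y).Nonempty) : y ∈ geodesicCap (r + r') x := by
  obtain ⟨z, hzx, hzy⟩ := h
  rw [mem_geodesicCap_iff_angle_le] at *
  calc angle x.1 y.1 ≤ angle x.1 z.1 + angle z.1 y.1 := angle_le_angle_add_angle _ _ _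
    _ ≤ r + r' := add_le_add hzx (angle_comm y.1 z.1 ▸ hzy)

lemma measurableSet_geodesicCap (s : ℝ) (x : 𝕊 d) : MeasurableSet (geodesicCap s x) :=
  measurableSet_le (by fun_prop) measurable_const

lemma measurableSet_setOf_mem_geodesicCap (s : ℝ) :
    MeasurableSet {p : 𝕊 d × 𝕊 d | p.2 ∈ geodesicCap s p.1} :=
  measurableSet_le (f := fun p : 𝕊 d × 𝕊 d ↦ arccos ⟪p.1.1, p.2.1⟫_ℝ) (by fun_prop)
    measurable_const

lemma measurable_sphereMap
    (f : EuclideanSpace ℝ (Fin d) ≃ₗᵢ[ℝ] EuclideanSpace ℝ (Fin d)) :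
    Measurable (sphereMap f) :=
  Continuous.measurable (by unfold sphereMap; fun_prop)

lemma sphereMap_preimage_geodesicCap
    (f : EuclideanSpace ℝ (Fin d) ≃ₗᵢ[ℝ] EuclideanSpace ℝ (Fin d)) (s : ℝ)
    (x : 𝕊 d) : sphereMap f ⁻¹' geodesicCap s x = geodesicCap s (sphereMap f.symm x) := by
  ext y
  simp only [geodesicCap, mem_preimage, mem_ofPred_eq, sphereMap]
  rw [← f.inner_map_map (f.symm x), f.apply_symm_apply]

lemma exists_sphereMap_eq (x y : 𝕊 d) :
    ∃ f : EuclideanSpace ℝ (Fin d) ≃ₗᵢ[ℝ] EuclideanSpace ℝ (Fin d),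
      sphereMap f x = y :=
  ⟨(ℝ ∙ (x.1 - y.1))ᗮ.reflection,
    Subtype.ext (Submodule.reflection_sub (by simp [norm_eq_of_mem_sphere]))⟩

lemma setOf_mem_capCone_eq_geodesicCap {s : ℝ} (hs : s ∈ Icc 0 π)
    {v : EuclideanSpace ℝ (Fin d)} (hv : v ≠ 0) (hv1 : ‖v‖ ≤ 1) :
    {y : 𝕊 d | v ∈ capCone s y.1} =
      geodesicCap s ⟨‖v‖⁻¹ • v, by simp [norm_smul, hv]⟩ := by
  ext y
  simp only [capCone, mem_ofPred_eq, hv1, true_and, mem_geodesicCap_iff_cos_le hs]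
  rw [real_inner_smul_left, le_inv_mul_iff₀ (norm_pos_iff.2 hv), real_inner_comm, mul_comm]

def IsIsometryInvariant (σ : Measure (𝕊 d)) : Prop :=
  ∀ f : EuclideanSpace ℝ (Fin d) ≃ₗᵢ[ℝ] EuclideanSpace ℝ (Fin d),
    Measure.map (sphereMap f) σ = σ

variable {σ : Measure (𝕊 d)}

lemma IsIsometryInvariant.measure_geodesicCap_congr (hσ : IsIsometryInvariant σ) (s : ℝ)
    (x y : 𝕊 d) : σ (geodesicCap s x) = σ (geodesicCap s y) := by
  obtain ⟨f, rfl⟩ := exists_sphereMap_eq x y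
  have hx : sphereMap f.symm (sphereMap f x) = x := Subtype.ext (f.symm_apply_apply x)
  conv_rhs => rw [← hσ f, Measure.map_apply (measurable_sphereMap f)
    (measurableSet_geodesicCap _ _), sphereMap_preimage_geodesicCap, hx]

lemma IsIsometryInvariant.measure_prod_setOf_mem_geodesicCap [SFinite σ]
    (hσ : IsIsometryInvariant σ) (μ : Measure (𝕊 d)) [IsProbabilityMeasure μ] (s : ℝ)
    (x : 𝕊 d) : (μ.prod σ) {p | p.2 ∈ geodesicCap s p.1} = σ (geodesicCap s x) := by
  rw [Measure.prod_apply (measurableSet_setOf_mem_geodesicCap s)]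
  simp_rw [preimage_ofPred_eq, ofPred_mem_eq, hσ.measure_geodesicCap_congr s _ x]
  rw [lintegral_const, measure_univ, mul_one]

-- Fubini for the indicator of `{(y, v) | v ∈ capCone s y}`: for `0 < ‖v‖ ≤ 1` the slice at
-- `v` is the cap around `v / ‖v‖`, and every slice at `y` is the image of `capCone s x` under
-- an isometry.
lemma IsIsometryInvariant.measure_geodesicCap_mul_volume_closedBall [IsProbabilityMeasure σ]
    (hσ : IsIsometryInvariant σ) {s : ℝ} (hs : s ∈ Icc 0 π) (x : 𝕊 d) :
    σ (geodesicCap s x) * volume (closedBall (0 : EuclideanSpace ℝ (Fin d)) 1) =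
      volume (capCone s x.1) := by
  have : Nontrivial (EuclideanSpace ℝ (Fin d)) :=
    nontrivial_of_ne _ _ (ne_zero_of_mem_unit_sphere x)
  set T : Set (𝕊 d × EuclideanSpace ℝ (Fin d)) := {p | p.2 ∈ capCone s p.1.1}
  have hT : MeasurableSet T := by
    simp only [T, capCone, ofPred_and]
    exact (measurableSet_le (by fun_prop) measurable_const).inter
      (measurableSet_le (by fun_prop) (by fun_prop))
  have hslice_sphere : ∀ v ≠ 0, σ ((fun y ↦ (y, v)) ⁻¹' T) =
      (closedBall 0 1).indicator (fun _ ↦ σ (geodesicCap s x)) v := by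
    intro v hv
    by_cases hv1 : ‖v‖ ≤ 1
    · rw [show (fun y ↦ (y, v)) ⁻¹' T = _ from setOf_mem_capCone_eq_geodesicCap hs hv hv1,
        hσ.measure_geodesicCap_congr s _ x, indicator_of_mem (mem_closedBall_zero_iff.2 hv1)]
    · have hempty : (fun y ↦ (y, v)) ⁻¹' T = ∅ := by
        ext y
        simp [T, capCone, hv1]
      rw [hempty, measure_empty, indicator_of_notMem (by simpa using hv1)]
  have hslice_ball : ∀ y : 𝕊 d, volume (Prod.mk y ⁻¹' T) = volume (capCone s x.1) := by
    intro y
    obtain ⟨f, rfl⟩ := exists_sphereMap_eq x y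
    exact f.volume_capCone s x
  calc σ (geodesicCap s x) * volume (closedBall (0 : EuclideanSpace ℝ (Fin d)) 1)
      = ∫⁻ v, (closedBall 0 1).indicator (fun _ ↦ σ (geodesicCap s x)) v := by
        rw [lintegral_indicator_const measurableSet_closedBall]
    _ = ∫⁻ v, σ ((fun y ↦ (y, v)) ⁻¹' T) := lintegral_congr_ae <| by
        filter_upwards [Measure.ae_ne volume 0] with v hv using (hslice_sphere v hv).symm
    _ = ∫⁻ y, volume (Prod.mk y ⁻¹' T) ∂σ := by
        rw [← Measure.prod_apply_symm hT, Measure.prod_apply hT]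
    _ = volume (capCone s x.1) := by
        simp_rw [hslice_ball]
        rw [lintegral_const, measure_univ, mul_one]

lemma IsIsometryInvariant.measure_geodesicCap_eq [IsProbabilityMeasure σ]
    (hσ : IsIsometryInvariant σ) (hd : 2 ≤ d) {s : ℝ} (hs : s ∈ Icc 0 π) (x : 𝕊 d) :
    σ (geodesicCap s x) =
      ENNReal.ofReal (sinPowIntegral (d - 2) s / sinPowIntegral (d - 2) π) := by
  obtain ⟨C, hC⟩ := exists_volume_capCone_eq (F := EuclideanSpace ℝ (Fin d))
    (by rwa [finrank_euclideanSpace_fin]) (norm_eq_of_mem_sphere x)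
  rw [finrank_euclideanSpace_fin] at hC
  have : Nontrivial (EuclideanSpace ℝ (Fin d)) :=
    nontrivial_of_ne _ _ (ne_zero_of_mem_unit_sphere x)
  have hball := (hσ.measure_geodesicCap_mul_volume_closedBall ⟨pi_pos.le, le_rfl⟩ x).trans
    (hC π ⟨pi_pos.le, le_rfl⟩)
  rw [geodesicCap_pi, measure_univ, one_mul] at hball
  have hball0 : C * ENNReal.ofReal (sinPowIntegral (d - 2) π) ≠ 0 :=
    hball ▸ (measure_closedBall_pos _ _ one_pos).ne'
  have hballtop : C * ENNReal.ofReal (sinPowIntegral (d - 2) π) ≠ ⊤ :=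
    hball ▸ measure_closedBall_lt_top.ne
  have hC0 : C ≠ 0 := left_ne_zero_of_mul hball0
  have hCtop : C ≠ ⊤ := fun h ↦
    hballtop (ENNReal.mul_eq_top.2 (.inr ⟨h, right_ne_zero_of_mul hball0⟩))
  have hJ : 0 < sinPowIntegral (d - 2) π :=
    ENNReal.ofReal_pos.1 (pos_iff_ne_zero.2 (right_ne_zero_of_mul hball0))
  rw [ENNReal.ofReal_div_of_pos hJ, ENNReal.eq_div_iff (right_ne_zero_of_mul hball0)
    ENNReal.ofReal_ne_top, ← ENNReal.mul_right_inj hC0 hCtop, ← hC s hs, ← mul_assoc,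
    ← hball, mul_comm, hσ.measure_geodesicCap_mul_volume_closedBall hs x]

lemma IsIsometryInvariant.measure_geodesicCap_two_mul_le [IsProbabilityMeasure σ]
    (hσ : IsIsometryInvariant σ) (hd : 2 ≤ d) {r : ℝ} (hr : r ∈ Icc 0 π) (x : 𝕊 d) :
    σ (geodesicCap (2 * r) x) ≤ 2 ^ (d - 1) * σ (geodesicCap r x) := by
  have hmin : min (2 * r) π ∈ Icc 0 π :=
    ⟨le_min (by linarith [hr.1]) pi_pos.le, min_le_right _ _⟩
  rw [← geodesicCap_min_pi, hσ.measure_geodesicCap_eq hd hmin, hσ.measure_geodesicCap_eq hd hr,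
    ← ENNReal.ofReal_ofNat 2, ← ENNReal.ofReal_pow zero_le_two,
    ← ENNReal.ofReal_mul (by positivity), ← mul_div_assoc]
  refine ENNReal.ofReal_le_ofReal
    (div_le_div_of_nonneg_right ?_ (sinPowIntegral_nonneg _ pi_pos.le))
  calc sinPowIntegral (d - 2) (min (2 * r) π) ≤ sinPowIntegral (d - 2) (2 * r) :=
        sinPowIntegral_mono _ hmin.1 (min_le_left _ _)
    _ ≤ 2 ^ (d - 2 + 1) * sinPowIntegral (d - 2) r := sinPowIntegral_two_mul_le _ hr.1
    _ = 2 ^ (d - 1) * sinPowIntegral (d - 2) r := by rw [show d - 2 + 1 = d - 1 by omega]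

end Sphere

theorem caps_intersection_probability_le_general {d : ℕ} (hd : 2 ≤ d) (N : ℕ)
    (σ : Measure (Metric.sphere (0 : EuclideanSpace ℝ (Fin d)) 1)) [IsProbabilityMeasure σ]
    -- σ is the uniform distribution: it is invariant under all ambient linear isometries
    (hσinv : ∀ f : EuclideanSpace ℝ (Fin d) ≃ₗᵢ[ℝ] EuclideanSpace ℝ (Fin d),
      Measure.map (sphereMap f) σ = σ)
    (rN : ℝ) (hrN : rN ∈ Set.Ioo 0 π)
    -- every cap of radius rN has normalized surface measure 1/N
    (hcap : ∀ x, σ (geodesicCap rN x) = 1 / N)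
    {Ω : Type*} [MeasurableSpace Ω] (P : Measure Ω) [IsProbabilityMeasure P]
    (U₁ U₂ : Ω → Metric.sphere (0 : EuclideanSpace ℝ (Fin d)) 1)
    (hU₁ : Measurable U₁) (hU₂ : Measurable U₂)
    (hindep : IndepFun U₁ U₂ P)
    (hdist₁ : Measure.map U₁ P = σ) (hdist₂ : Measure.map U₂ P = σ) :
    P {ω | (geodesicCap rN (U₁ ω) ∩ geodesicCap rN (U₂ ω)).Nonempty} ≤ 2 ^ (d - 1) / N := by
  have hσ : IsIsometryInvariant σ := hσinv
  have hpair : P.map (fun ω ↦ (U₁ ω, U₂ ω)) = σ.prod σ := by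
    rw [(indepFun_iff_map_prod_eq_prod_map_map hU₁.aemeasurable hU₂.aemeasurable).1 hindep,
      hdist₁, hdist₂]
  obtain ⟨x⟩ := nonempty_of_isProbabilityMeasure σ
  calc P {ω | (geodesicCap rN (U₁ ω) ∩ geodesicCap rN (U₂ ω)).Nonempty}
      ≤ P ((fun ω ↦ (U₁ ω, U₂ ω)) ⁻¹' {p | p.2 ∈ geodesicCap (2 * rN) p.1}) :=
        measure_mono fun ω h ↦ two_mul rN ▸ mem_geodesicCap_add_of_inter_nonempty h
    _ = (σ.prod σ) {p | p.2 ∈ geodesicCap (2 * rN) p.1} := by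
        rw [← hpair,
          Measure.map_apply (hU₁.prodMk hU₂) (measurableSet_setOf_mem_geodesicCap _)]
    _ = σ (geodesicCap (2 * rN) x) := hσ.measure_prod_setOf_mem_geodesicCap σ _ x
    _ ≤ 2 ^ (d - 1) * σ (geodesicCap rN x) :=
        hσ.measure_geodesicCap_two_mul_le hd ⟨hrN.1.le, hrN.2.le⟩ x
    _ = 2 ^ (d - 1) / N := by rw [hcap, mul_one_div]

theorem caps_intersection_probability_le {d : ℕ} (hd : 2 ≤ d) (N : ℕ) (hN : 2 ≤ N)
    (σ : Measure (Metric.sphere (0 : EuclideanSpace ℝ (Fin d)) 1)) [IsProbabilityMeasure σ]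
    -- σ is the uniform distribution: it is invariant under all ambient linear isometries
    (hσinv : ∀ f : EuclideanSpace ℝ (Fin d) ≃ₗᵢ[ℝ] EuclideanSpace ℝ (Fin d),
      Measure.map (sphereMap f) σ = σ)
    (rN : ℝ) (hrN : rN ∈ Set.Ioo 0 π)
    -- every cap of radius rN has normalized surface measure 1/N
    (hcap : ∀ x, σ (geodesicCap rN x) = 1 / N)
    {Ω : Type*} [MeasurableSpace Ω] (P : Measure Ω) [IsProbabilityMeasure P]
    (U₁ U₂ : Ω → Metric.sphere (0 : EuclideanSpace ℝ (Fin d)) 1)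
    (hU₁ : Measurable U₁) (hU₂ : Measurable U₂)
    (hindep : IndepFun U₁ U₂ P)
    (hdist₁ : Measure.map U₁ P = σ) (hdist₂ : Measure.map U₂ P = σ) :
    P {ω | (geodesicCap rN (U₁ ω) ∩ geodesicCap rN (U₂ ω)).Nonempty} ≤ 2 ^ (d - 1) / N :=
  caps_intersection_probability_le_general hd N σ hσinv rN hrN hcap P U₁ U₂ hU₁ hU₂ hindep hdist₁
    hdist₂
end

section
/- Let σ be a probability measure on a space S and C : S → (measurable subsets of S) with σ(C(x)) = 1/N for all x. Define f(x₁,…,x_N) = σ(⋃ᵢ C(xᵢ)). Then for any tuple y = (y₁,…,y_N) and replacement points y₁', y₂', the second-order difference Δ_{1,2}f := f(y) − f(y with y₁ replaced by y₁') − f(y with y₂ replaced by y₂') + f(y with both replaced) is nonzero only if at least one of the intersections C(y₁)∩C(y₂), C(y₁)∩C(y₂'), C(y₁')∩C(y₂), C(y₁')∩C(y₂') is nonempty. -/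
open MeasureTheory

private lemma measure_split {S : Type*} [MeasurableSpace S]
    (σ : Measure S) [IsProbabilityMeasure σ] {A B R : Set S}
    (hA : MeasurableSet A) (hB : MeasurableSet B) (hR : MeasurableSet R)
    (hAB : A ∩ B = ∅) :
    (σ (A ∪ (B ∪ R))).toReal
      = (σ (A ∪ R)).toReal + (σ (B ∪ R)).toReal - (σ R).toReal := by
  have hu : (A ∪ R) ∪ (B ∪ R) = A ∪ (B ∪ R) := by
    ext x; simp only [Set.mem_union]; tauto
  have hi : (A ∪ R) ∩ (B ∪ R) = R := by
    ext x
    have hx : ¬ (x ∈ A ∧ x ∈ B) := by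
      intro hx
      have : x ∈ A ∩ B := hx
      rw [hAB] at this
      exact this
    simp only [Set.mem_inter_iff, Set.mem_union]; tauto
  have h := measure_union_add_inter (μ := σ) (A ∪ R) (hB.union hR)
  rw [hu, hi] at h
  have h' := congrArg ENNReal.toReal h
  rw [ENNReal.toReal_add (measure_ne_top σ _) (measure_ne_top σ _),
      ENNReal.toReal_add (measure_ne_top σ _) (measure_ne_top σ _)] at h'
  linarith

private lemma aux_locality {S : Type*} [MeasurableSpace S]
    (σ : Measure S) [IsProbabilityMeasure σ] {N : ℕ}
    (C : S → Set S) (hCmeas : ∀ x, MeasurableSet (C x))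
    (f : (Fin N → S) → ℝ)
    (hf : ∀ x, f x = (σ (⋃ i, C (x i))).toReal)
    (y : Fin N → S) (i0 i1 : Fin N) (h01 : i0 ≠ i1) (y₁' y₂' : S)
    (hne : f y - f (Function.update y i0 y₁')
        - f (Function.update y i1 y₂')
        + f (Function.update (Function.update y i0 y₁') i1 y₂') ≠ 0) :
    (C (y i0) ∩ C (y i1)).Nonempty ∨
    (C (y i0) ∩ C y₂').Nonempty ∨
    (C y₁' ∩ C (y i1)).Nonempty ∨
    (C y₁' ∩ C y₂').Nonempty := by
  by_contra hcon
  push_neg at hcon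
  obtain ⟨h1, h2, h3, h4⟩ := hcon
  apply hne
  set R : Set S := ⋃ (i : Fin N) (_ : i ≠ i0 ∧ i ≠ i1), C (y i) with hRdef
  have hR : MeasurableSet R :=
    MeasurableSet.iUnion fun i => MeasurableSet.iUnion fun _ => hCmeas _
  have key : ∀ (x : Fin N → S), (∀ i, i ≠ i0 → i ≠ i1 → x i = y i) →
      (⋃ i, C (x i)) = C (x i0) ∪ (C (x i1) ∪ R) := by
    intro x hx
    ext s
    simp only [Set.mem_iUnion, Set.mem_union, hRdef]
    constructor
    · rintro ⟨i, hi⟩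
      by_cases hi0 : i = i0
      · subst hi0; exact Or.inl hi
      by_cases hi1 : i = i1
      · subst hi1; exact Or.inr (Or.inl hi)
      · exact Or.inr (Or.inr ⟨i, ⟨hi0, hi1⟩, by rwa [hx i hi0 hi1] at hi⟩)
    · rintro (h | h | ⟨i, ⟨hi0, hi1⟩, hi⟩)
      · exact ⟨i0, h⟩
      · exact ⟨i1, h⟩
      · exact ⟨i, by rwa [hx i hi0 hi1]⟩
  have e1 : (⋃ i, C (y i)) = C (y i0) ∪ (C (y i1) ∪ R) :=
    key y (fun i _ _ => rfl)
  have e2 : (⋃ i, C (Function.update y i0 y₁' i)) = C y₁' ∪ (C (y i1) ∪ R) := by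
    rw [key _ (fun i hi0 _ => Function.update_of_ne hi0 _ _),
        Function.update_self, Function.update_of_ne (Ne.symm h01)]
  have e3 : (⋃ i, C (Function.update y i1 y₂' i)) = C (y i0) ∪ (C y₂' ∪ R) := by
    rw [key _ (fun i _ hi1 => Function.update_of_ne hi1 _ _),
        Function.update_self, Function.update_of_ne h01]
  have e4 : (⋃ i, C (Function.update (Function.update y i0 y₁') i1 y₂' i))
      = C y₁' ∪ (C y₂' ∪ R) := by
    rw [key _ (fun i hi0 hi1 => by
        rw [Function.update_of_ne hi1, Function.update_of_ne hi0]),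
      Function.update_self, Function.update_of_ne h01, Function.update_self]
  rw [hf, hf, hf, hf, e1, e2, e3, e4,
    measure_split σ (hCmeas _) (hCmeas _) hR h1,
    measure_split σ (hCmeas _) (hCmeas _) hR h3,
    measure_split σ (hCmeas _) (hCmeas _) hR h2,
    measure_split σ (hCmeas _) (hCmeas _) hR h4]
  ring

theorem locality_second_difference {S : Type*} [MeasurableSpace S]
    (σ : Measure S) [IsProbabilityMeasure σ] (N : ℕ) (hN : 2 ≤ N)
    (C : S → Set S) (hCmeas : ∀ x, MeasurableSet (C x))
    (hC : ∀ x, σ (C x) = 1 / N)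
    (f : (Fin N → S) → ℝ)
    (hf : ∀ x, f x = (σ (⋃ i, C (x i))).toReal)
    (y : Fin N → S) (y₁' y₂' : S)
    (hne : f y - f (Function.update y ⟨0, by omega⟩ y₁')
        - f (Function.update y ⟨1, by omega⟩ y₂')
        + f (Function.update (Function.update y ⟨0, by omega⟩ y₁') ⟨1, by omega⟩ y₂') ≠ 0) :
    (C (y ⟨0, by omega⟩) ∩ C (y ⟨1, by omega⟩)).Nonempty ∨
    (C (y ⟨0, by omega⟩) ∩ C y₂').Nonempty ∨
    (C y₁' ∩ C (y ⟨1, by omega⟩)).Nonempty ∨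
    (C y₁' ∩ C y₂').Nonempty :=
  aux_locality σ C hCmeas f hf y ⟨0, by omega⟩ ⟨1, by omega⟩
    (by simp [Fin.ext_iff]) y₁' y₂' hne
end
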